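/- arXiv:1312.2139 — 2 statements merged into one kernel-verified Lean document; each statement's English description precedes it below -/
import Mathlib

section
/- Let d ≥ 1, i ∈ {1,…,d}, and q ∈ [1,∞]. Consider the two optimization problems over θ ∈ ℝ^d: (A) minimize ⟨θ, 𝟙⟩ subject to ‖θ‖_q ≤ 1; (B) minimize ⟨θ, 𝟙⟩ subject to ‖θ‖_q ≤ 1 and θ_j ≥ 0 for all j ∈ {1,…,i}; here 𝟙 is the all-ones vector. If θ^A and θ^B are optimal solutions of (A) and (B) respectively, then ⟨𝟙, θ^A⟩ ≤ ⟨𝟙, θ^B⟩ − (1 − 1/q)·i/d^{1/q}. -/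
/-! The vector `-d^{-1/q} 𝟙` lies on the unit sphere, so the unconstrained minimum is at most
`-d^{1-1/q}`. A point feasible for the sign-constrained problem can only have negative mass on the
`d - i` free coordinates, and by Hölder that mass is at most `(d-i)^{1-1/q}`. The gap
`d^{1-1/q} - (d-i)^{1-1/q} ≥ (1-1/q) i d^{-1/q}` is the tangent-line inequality for the concave
function `x ↦ x^{1-1/q}` at `x = d`. -/

open scoped ENNReal

open Finset

lemma Real.rpow_le_rpow_add_mul_rpow_sub_one_mul_sub {a b s : ℝ} (ha : 0 < a) (hb : 0 ≤ b)
    (hs0 : 0 ≤ s) (hs1 : s ≤ 1) : b ^ s ≤ a ^ s + s * a ^ (s - 1) * (b - a) := by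
  have hbern : (1 + (b / a - 1)) ^ s ≤ 1 + s * (b / a - 1) :=
    rpow_one_add_le_one_add_mul_self (by linarith [div_nonneg hb ha.le]) hs0 hs1
  rw [add_sub_cancel, Real.div_rpow hb ha.le, div_le_iff₀ (Real.rpow_pos_of_pos ha s)] at hbern
  rw [Real.rpow_sub_one ha.ne']
  calc b ^ s ≤ (1 + s * (b / a - 1)) * a ^ s := hbern
    _ = a ^ s + s * (a ^ s / a) * (b - a) := by field_simp

namespace PiLp

variable {ι : Type*} [Fintype ι] {q : ℝ≥0∞}

lemma sum_abs_le_card_rpow_mul_norm [Fact (1 ≤ q)] (f : PiLp q (fun _ : ι => ℝ))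
    (s : Finset ι) : ∑ j ∈ s, |f j| ≤ (#s : ℝ) ^ (1 - q⁻¹.toReal) * ‖f‖ := by
  rcases q.dichotomy with rfl | hq
  · calc ∑ j ∈ s, |f j| ≤ ∑ _j ∈ s, ‖f‖ := sum_le_sum fun j _ => norm_apply_le f j
      _ = _ := by simp
  set p := q.toReal
  have hp : 0 < p := by linarith
  have hsum_rpow : ∑ j ∈ s, |f j| ^ p ≤ ‖f‖ ^ p := by
    rw [norm_eq_sum hp, ← Real.rpow_mul (sum_nonneg fun j _ => by positivity),
      one_div_mul_cancel hp.ne', Real.rpow_one]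
    exact sum_le_sum_of_subset_of_nonneg (subset_univ s) fun j _ _ => by positivity
  have hpow : (∑ j ∈ s, |f j|) ^ p ≤ ((#s : ℝ) ^ (1 - p⁻¹) * ‖f‖) ^ p := by
    rw [Real.mul_rpow (by positivity) (norm_nonneg f), ← Real.rpow_mul (Nat.cast_nonneg _),
      sub_mul, inv_mul_cancel₀ hp.ne', one_mul]
    calc (∑ j ∈ s, |f j|) ^ p ≤ (#s : ℝ) ^ (p - 1) * ∑ j ∈ s, |f j| ^ p :=
          Real.rpow_sum_le_const_mul_sum_rpow_of_nonneg s hq fun j _ => abs_nonneg _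
      _ ≤ _ := by gcongr
  rw [ENNReal.toReal_inv]
  exact (Real.rpow_le_rpow_iff (sum_nonneg fun j _ => abs_nonneg _) (by positivity) hp).mp hpow

lemma neg_card_rpow_le_sum [Fact (1 ≤ q)] {θ : PiLp q (fun _ : ι => ℝ)} (hθ : ‖θ‖ ≤ 1)
    (s : Finset ι) (hθs : ∀ j ∉ s, 0 ≤ θ j) : -(#s : ℝ) ^ (1 - q⁻¹.toReal) ≤ ∑ j, θ j := by
  classical
  have hs : -(#s : ℝ) ^ (1 - q⁻¹.toReal) ≤ ∑ j ∈ s, θ j :=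
    calc -(#s : ℝ) ^ (1 - q⁻¹.toReal) ≤ -((#s : ℝ) ^ (1 - q⁻¹.toReal) * ‖θ‖) := by
          gcongr; exact mul_le_of_le_one_right (by positivity) hθ
      _ ≤ -∑ j ∈ s, |θ j| := neg_le_neg (sum_abs_le_card_rpow_mul_norm θ s)
      _ ≤ ∑ j ∈ s, θ j := by
          rw [← sum_neg_distrib]; exact sum_le_sum fun j _ => neg_abs_le _
  have hsc : 0 ≤ ∑ j ∈ sᶜ, θ j := sum_nonneg fun j hj => hθs j (mem_compl.mp hj)
  rw [← sum_add_sum_compl s]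
  linarith

lemma sum_le_neg_card_rpow_of_isMinOn [Fact (1 ≤ q)] [Nonempty ι] {θ : PiLp q (fun _ : ι => ℝ)}
    (hθ : IsMinOn (fun θ : PiLp q (fun _ : ι => ℝ) => ∑ j, θ j) {θ | ‖θ‖ ≤ 1} θ) :
    ∑ j, θ j ≤ -(Fintype.card ι : ℝ) ^ (1 - q⁻¹.toReal) := by
  have hcard : (0 : ℝ) < Fintype.card ι := by exact_mod_cast Fintype.card_pos
  set c : ℝ := -(Fintype.card ι : ℝ) ^ (-q⁻¹.toReal)
  have hc : ‖WithLp.toLp q (Function.const ι c)‖ = 1 := by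
    rw [norm_toLp_const', Real.norm_eq_abs, abs_neg, abs_of_pos (by positivity), one_div,
      NNReal.coe_natCast, ← Real.rpow_add hcard, add_neg_cancel, Real.rpow_zero]
  calc ∑ j, θ j ≤ ∑ _j : ι, c := hθ (Set.mem_ofPred.mpr hc.le)
    _ = _ := by
      rw [sum_const, card_univ, nsmul_eq_mul, sub_eq_add_neg, Real.rpow_add hcard, Real.rpow_one]
      ring

end PiLp

theorem linear_opt_sign_constraint_gap_general
    (d : ℕ) (hd : 1 ≤ d) (i : ℕ) (hid : i ≤ d)
    (q : ℝ≥0∞) [hq : Fact (1 ≤ q)]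
    (θA θB : PiLp q (fun _ : Fin d => ℝ))
    (hAmin : IsMinOn (fun θ : PiLp q (fun _ : Fin d => ℝ) => ∑ j, θ j)
      {θ | ‖θ‖ ≤ 1} θA)
    (hBmem : ‖θB‖ ≤ 1 ∧ ∀ j : Fin d, (j : ℕ) < i → 0 ≤ θB j) :
    ∑ j, θA j ≤ (∑ j, θB j) - (1 - q⁻¹.toReal) * i / (d : ℝ) ^ q⁻¹.toReal := by
  set t := q⁻¹.toReal
  have ht0 : 0 ≤ t := ENNReal.toReal_nonneg
  have ht1 : t ≤ 1 := ENNReal.toReal_le_of_le_ofReal zero_le_one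
    (by simpa using ENNReal.inv_le_one.mpr hq.out)
  have : Nonempty (Fin d) := Fin.pos_iff_nonempty.mp hd
  have hA : ∑ j, θA j ≤ -(d : ℝ) ^ (1 - t) := by
    simpa only [Fintype.card_fin] using PiLp.sum_le_neg_card_rpow_of_isMinOn hAmin
  have hB : -((d : ℝ) - i) ^ (1 - t) ≤ ∑ j, θB j := by
    have hcard : (#{j : Fin d | ¬ (j : ℕ) < i} : ℝ) = d - i := by
      rw [filter_not, card_sdiff_of_subset (filter_subset _ _), Fin.card_filter_val_lt, card_univ,
        Fintype.card_fin, min_eq_right hid, Nat.cast_sub hid]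
    rw [← hcard]
    exact PiLp.neg_card_rpow_le_sum hBmem.1 _ fun j hj => hBmem.2 j (by simpa using hj)
  have hconcave := Real.rpow_le_rpow_add_mul_rpow_sub_one_mul_sub (a := d) (b := d - i)
    (by exact_mod_cast hd) (by simp [hid]) (sub_nonneg.mpr ht1) (sub_le_self 1 ht0)
  rw [sub_sub_cancel_left, Real.rpow_neg (Nat.cast_nonneg d)] at hconcave
  rw [mul_div_assoc, div_eq_mul_inv]
  linarith

/-- **Lemma (gap between constrained and sign-constrained linear optimization
over the `ℓ_q` ball).** Let `d ≥ 1`, `1 ≤ i ≤ d` and `q ∈ [1,∞]` (the norm on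
`PiLp q` is the `ℓ_q`-norm, with `1/q = 0` when `q = ∞`). If `θ^A` minimizes
`θ ↦ ⟨θ, 𝟙⟩` subject to `‖θ‖_q ≤ 1`, and `θ^B` minimizes the same objective
subject to `‖θ‖_q ≤ 1` together with `θ_j ≥ 0` for the first `i` coordinates,
then `⟨𝟙, θ^A⟩ ≤ ⟨𝟙, θ^B⟩ − (1 − 1/q)·i/d^{1/q}`. -/
theorem linear_opt_sign_constraint_gap
    (d : ℕ) (hd : 1 ≤ d) (i : ℕ) (hi1 : 1 ≤ i) (hid : i ≤ d)
    (q : ℝ≥0∞) [hq : Fact (1 ≤ q)]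
    (θA θB : PiLp q (fun _ : Fin d => ℝ))
    (hAmem : ‖θA‖ ≤ 1)
    (hAmin : IsMinOn (fun θ : PiLp q (fun _ : Fin d => ℝ) => ∑ j, θ j)
      {θ | ‖θ‖ ≤ 1} θA)
    (hBmem : ‖θB‖ ≤ 1 ∧ ∀ j : Fin d, (j : ℕ) < i → 0 ≤ θB j)
    (hBmin : IsMinOn (fun θ : PiLp q (fun _ : Fin d => ℝ) => ∑ j, θ j)
      {θ | ‖θ‖ ≤ 1 ∧ ∀ j : Fin d, (j : ℕ) < i → 0 ≤ θ j} θB) :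
    ∑ j, θA j ≤ (∑ j, θB j) - (1 - q⁻¹.toReal) * i / (d : ℝ) ^ q⁻¹.toReal :=
  linear_opt_sign_constraint_gap_general d hd i hid q (hq := hq) θA θB hAmin hBmem
end

section
/- Let v ∈ ℝ^d satisfy ‖v‖_∞ ≤ 1, let δ ≥ 0, σ ≥ 0, and let X ~ N(δ·v, σ²·I_{d×d}) be a Gaussian random vector in ℝ^d. Then E[‖X‖_∞²] ≤ 3·σ²·log(3d) + 4·δ². -/
/-!
Shifting the mean by `δ • v` moves the sup-norm by at most `δ`, and
`(a + b)² ≤ 4/3 a² + 4 b²`, so it suffices to bound `E‖Y‖²` for a centred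
`Y ~ N(0, σ² I)`. With `t = 4 / (9σ²)`, Jensen's inequality and a union bound over the
coordinates give `exp (t E‖Y‖²) ≤ E exp (t ‖Y‖²) ≤ ∑ⱼ E exp (t Yⱼ²) = 3d`, because
`E exp (t Z²) = (1 - 2tσ²)^(-1/2) = 3` for `Z ~ N(0, σ²)`.
-/

open MeasureTheory ProbabilityTheory Real
open scoped NNReal

namespace ProbabilityTheory

lemma gaussianPDFReal_zero_mul_exp_mul_sq (v : ℝ≥0) (t x : ℝ) :
    gaussianPDFReal 0 v x * exp (t * x ^ 2) =
      (√(2 * π * v))⁻¹ * exp (-(1 / (2 * v) - t) * x ^ 2) := by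
  rw [gaussianPDFReal, mul_assoc, ← exp_add]
  congr 2
  ring

lemma integrable_exp_mul_sq_gaussianReal {v : ℝ≥0} (hv : v ≠ 0) {t : ℝ}
    (ht : 2 * t * v < 1) :
    Integrable (fun x ↦ exp (t * x ^ 2)) (gaussianReal 0 v) := by
  have hb : 0 < 1 / (2 * (v : ℝ)) - t := by
    rw [sub_pos, lt_div_iff₀ (by positivity)]
    linarith
  rw [gaussianReal_of_var_ne_zero 0 hv, gaussianPDF_def,
    integrable_withDensity_iff_integrable_smul' (by fun_prop) (by simp)]
  simp_rw [ENNReal.toReal_ofReal (gaussianPDFReal_nonneg _ _ _), smul_eq_mul,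
    gaussianPDFReal_zero_mul_exp_mul_sq]
  exact (integrable_exp_neg_mul_sq hb).const_mul _

-- For `2 * t * v ≥ 1` both sides are junk `0`: the integrand is not integrable and `√` of a
-- nonpositive number is `0`.
lemma integral_exp_mul_sq_gaussianReal {v : ℝ≥0} (hv : v ≠ 0) (t : ℝ) :
    ∫ x, exp (t * x ^ 2) ∂gaussianReal 0 v = (√(1 - 2 * t * v))⁻¹ := by
  simp_rw [integral_gaussianReal_eq_integral_smul hv, smul_eq_mul,
    gaussianPDFReal_zero_mul_exp_mul_sq, integral_const_mul, integral_gaussian, ← sqrt_inv]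
  rw [← sqrt_mul (by positivity)]
  congr 1
  field_simp

lemma norm_add_sq_le {E : Type*} [SeminormedAddCommGroup E] (a b : E) :
    ‖a + b‖ ^ 2 ≤ 4 / 3 * ‖a‖ ^ 2 + 4 * ‖b‖ ^ 2 := by
  nlinarith [norm_add_le a b, norm_nonneg (a + b), norm_nonneg a, norm_nonneg b,
    sq_nonneg (‖a‖ - 3 * ‖b‖)]

lemma exp_integral_le_integral_exp {α : Type*} [MeasurableSpace α] {μ : Measure α}
    [IsProbabilityMeasure μ] {f : α → ℝ} (hf : Integrable f μ)
    (hexp : Integrable (fun x ↦ exp (f x)) μ) :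
    exp (∫ x, f x ∂μ) ≤ ∫ x, exp (f x) ∂μ :=
  convexOn_exp.map_integral_le continuous_exp.continuousOn isClosed_univ
    (ae_of_all _ fun _ ↦ Set.mem_univ _) hf hexp

section Pi

variable {ι : Type*} [Fintype ι]

lemma exists_pi_norm_eq_norm {E : Type*} [SeminormedAddCommGroup E] [Nonempty ι]
    (y : ι → E) : ∃ j, ‖y‖ = ‖y j‖ := by
  obtain ⟨j, -, hj⟩ := Finset.exists_mem_eq_sup Finset.univ Finset.univ_nonempty
    fun j ↦ ‖y j‖₊
  exact ⟨j, by rw [Pi.norm_def, hj, coe_nnnorm]⟩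

lemma apply_pi_norm_le_sum {E : Type*} [SeminormedAddCommGroup E] [Nonempty ι] {f : ℝ → ℝ}
    (hf : ∀ r, 0 ≤ f r) (y : ι → E) : f ‖y‖ ≤ ∑ j, f ‖y j‖ := by
  obtain ⟨j, hj⟩ := exists_pi_norm_eq_norm y
  rw [hj]
  exact Finset.single_le_sum (f := fun j ↦ f ‖y j‖) (fun j _ ↦ hf _) (Finset.mem_univ j)

lemma pi_norm_eq_ciSup_abs [Nonempty ι] (x : ι → ℝ) : ‖x‖ = ⨆ j, |x j| :=
  le_antisymm
    ((pi_norm_le_iff_of_nonempty x).2 fun j ↦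
      le_ciSup (Finite.bddAbove_range fun j ↦ |x j|) j)
    (ciSup_le fun j ↦ norm_le_pi_norm x j)

lemma sq_pi_norm_le_sum [Nonempty ι] (y : ι → ℝ) : ‖y‖ ^ 2 ≤ ∑ j, y j ^ 2 := by
  simpa only [Real.norm_eq_abs, sq_abs] using apply_pi_norm_le_sum (f := (· ^ 2)) sq_nonneg y

lemma exp_mul_sq_pi_norm_le_sum [Nonempty ι] (t : ℝ) (y : ι → ℝ) :
    exp (t * ‖y‖ ^ 2) ≤ ∑ j, exp (t * y j ^ 2) := by
  have := apply_pi_norm_le_sum (f := fun r ↦ exp (t * r ^ 2)) (fun _ ↦ (exp_pos _).le) y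
  simp only [Real.norm_eq_abs, sq_abs] at this
  exact this

lemma pi_gaussianReal_eq_map_add (m : ι → ℝ) (v : ℝ≥0) :
    Measure.pi (fun j ↦ gaussianReal (m j) v) =
      (Measure.pi fun _ : ι ↦ gaussianReal 0 v).map (· + m) := by
  rw [show (· + m) = fun (y : ι → ℝ) j ↦ y j + m j from rfl,
    Measure.pi_map_pi fun _ ↦ (measurable_add_const _).aemeasurable]
  simp [gaussianReal_map_add_const]

lemma integrable_eval_comp_pi_gaussianReal (v : ℝ≥0) {f : ℝ → ℝ}
    (hf : Integrable f (gaussianReal 0 v)) (j : ι) :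
    Integrable (fun y : ι → ℝ ↦ f (y j)) (Measure.pi fun _ ↦ gaussianReal 0 v) :=
  integrable_comp_eval (X := fun _ ↦ ℝ) (μ := fun _ ↦ gaussianReal 0 v) hf

variable [Nonempty ι]

lemma integrable_sq_pi_norm_pi_gaussianReal (v : ℝ≥0) :
    Integrable (fun y : ι → ℝ ↦ ‖y‖ ^ 2) (Measure.pi fun _ ↦ gaussianReal 0 v) :=
  (integrable_finsetSum _ fun j _ ↦ integrable_eval_comp_pi_gaussianReal v
      (memLp_id_gaussianReal 2).integrable_sq j).mono' (by fun_prop)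
    (ae_of_all _ fun y ↦ by simpa using sq_pi_norm_le_sum y)

lemma integrable_exp_mul_sq_pi_norm_pi_gaussianReal {v : ℝ≥0} (hv : v ≠ 0) {t : ℝ}
    (ht : 2 * t * v < 1) :
    Integrable (fun y : ι → ℝ ↦ exp (t * ‖y‖ ^ 2)) (Measure.pi fun _ ↦ gaussianReal 0 v) :=
  (integrable_finsetSum _ fun j _ ↦ integrable_eval_comp_pi_gaussianReal v
      (integrable_exp_mul_sq_gaussianReal hv ht) j).mono' (by fun_prop)
    (ae_of_all _ fun y ↦ by simpa using exp_mul_sq_pi_norm_le_sum t y)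

lemma integral_exp_mul_sq_pi_norm_pi_gaussianReal_le {v : ℝ≥0} (hv : v ≠ 0) {t : ℝ}
    (ht : 2 * t * v < 1) :
    ∫ y : ι → ℝ, exp (t * ‖y‖ ^ 2) ∂(Measure.pi fun _ ↦ gaussianReal 0 v) ≤
      Fintype.card ι * (√(1 - 2 * t * v))⁻¹ := by
  have hint (j : ι) := integrable_eval_comp_pi_gaussianReal v
    (integrable_exp_mul_sq_gaussianReal hv ht) j
  calc _ ≤ ∫ y : ι → ℝ, ∑ j, exp (t * y j ^ 2) ∂(Measure.pi fun _ ↦ gaussianReal 0 v) :=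
        integral_mono (integrable_exp_mul_sq_pi_norm_pi_gaussianReal hv ht)
          (integrable_finsetSum _ fun j _ ↦ hint j) (exp_mul_sq_pi_norm_le_sum t)
    _ = _ := by
        rw [integral_finsetSum _ fun j _ ↦ hint j]
        simp [integral_comp_eval (X := fun _ ↦ ℝ) (μ := fun _ ↦ gaussianReal 0 v)
          (f := fun x : ℝ ↦ exp (t * x ^ 2)) (by fun_prop),
          integral_exp_mul_sq_gaussianReal hv]

lemma integral_sq_pi_norm_pi_gaussianReal_le (v : ℝ≥0) :
    ∫ y : ι → ℝ, ‖y‖ ^ 2 ∂(Measure.pi fun _ ↦ gaussianReal 0 v) ≤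
      9 / 4 * v * log (3 * Fintype.card ι) := by
  rcases eq_or_ne v 0 with rfl | hv
  · have h0 : ∀ᵐ y ∂(Measure.pi fun _ : ι ↦ gaussianReal 0 0), ∀ j, y j = 0 :=
      ae_all_iff.2 fun j ↦ (Measure.tendsto_eval_ae_ae (μ := fun _ ↦ gaussianReal 0 0)
        (i := j)).eventually (p := (· = 0)) (by simp [gaussianReal_zero_var, ae_dirac_eq])
    rw [integral_congr_ae (g := fun _ ↦ 0) (h0.mono fun y hy ↦ by simp [funext hy])]
    simp
  set P := Measure.pi fun _ : ι ↦ gaussianReal 0 v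
  have hv' : (0 : ℝ) < v := by positivity
  set t : ℝ := 4 / (9 * v) with ht_def
  have ht : 2 * t * v = 8 / 9 := by rw [ht_def]; field_simp; norm_num
  have hmgf : (√(1 - 2 * t * v))⁻¹ = 3 := by
    rw [ht, show (1 : ℝ) - 8 / 9 = (3 ^ 2)⁻¹ by norm_num, sqrt_inv, sqrt_sq (by norm_num),
      inv_inv]
  have hexp : exp (t * ∫ y, ‖y‖ ^ 2 ∂P) ≤ 3 * Fintype.card ι :=
    calc exp (t * ∫ y, ‖y‖ ^ 2 ∂P) = exp (∫ y, t * ‖y‖ ^ 2 ∂P) := by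
          rw [integral_const_mul]
      _ ≤ ∫ y, exp (t * ‖y‖ ^ 2) ∂P :=
        exp_integral_le_integral_exp ((integrable_sq_pi_norm_pi_gaussianReal v).const_mul t)
          (integrable_exp_mul_sq_pi_norm_pi_gaussianReal hv (by linarith))
      _ ≤ Fintype.card ι * (√(1 - 2 * t * v))⁻¹ :=
        integral_exp_mul_sq_pi_norm_pi_gaussianReal_le hv (by linarith)
      _ = 3 * Fintype.card ι := by rw [hmgf, mul_comm]
  have hlog := (le_log_iff_exp_le (by positivity)).2 hexp
  calc ∫ y, ‖y‖ ^ 2 ∂P = 9 / 4 * v * (t * ∫ y, ‖y‖ ^ 2 ∂P) := by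
        rw [ht_def]; field_simp
    _ ≤ 9 / 4 * v * log (3 * Fintype.card ι) := by gcongr

end Pi

end ProbabilityTheory

theorem gaussian_sup_norm_sq_moment_general
    (d : ℕ) (hd : 1 ≤ d) (v : Fin d → ℝ) (hv : ∀ j, |v j| ≤ 1)
    (δ σ : ℝ) (hδ : 0 ≤ δ) :
    (∫ x : Fin d → ℝ, (⨆ j, |x j|) ^ 2
        ∂(Measure.pi fun j => gaussianReal (δ * v j) ⟨σ ^ 2, sq_nonneg σ⟩)) ≤
      3 * σ ^ 2 * Real.log (3 * d) + 4 * δ ^ 2 := by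
  have : Nonempty (Fin d) := ⟨⟨0, hd⟩⟩
  set s : ℝ≥0 := ⟨σ ^ 2, sq_nonneg σ⟩
  set P := Measure.pi fun _ : Fin d ↦ gaussianReal 0 s
  have hδv : ‖δ • v‖ ^ 2 ≤ δ ^ 2 := by
    rw [norm_smul, norm_of_nonneg hδ]
    gcongr
    exact mul_le_of_le_one_right hδ ((pi_norm_le_iff_of_nonneg zero_le_one).2 hv)
  have hint : Integrable (fun y ↦ ‖y‖ ^ 2) P := integrable_sq_pi_norm_pi_gaussianReal s
  simp_rw [← pi_norm_eq_ciSup_abs]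
  rw [show Measure.pi (fun j ↦ gaussianReal (δ * v j) s) = P.map (· + δ • v) from
    pi_gaussianReal_eq_map_add (δ • v) s, integral_map (by fun_prop) (by fun_prop)]
  calc ∫ y, ‖y + δ • v‖ ^ 2 ∂P ≤ ∫ y, (4 / 3 * ‖y‖ ^ 2 + 4 * δ ^ 2) ∂P :=
        integral_mono_of_nonneg (ae_of_all _ fun _ ↦ by positivity)
          ((hint.const_mul _).add (integrable_const _)) (ae_of_all _ fun y ↦
            (norm_add_sq_le y (δ • v)).trans (by linarith))
    _ = 4 / 3 * ∫ y, ‖y‖ ^ 2 ∂P + 4 * δ ^ 2 := by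
        rw [integral_add (hint.const_mul _) (integrable_const _), integral_const_mul]
        simp
    _ ≤ 4 / 3 * (9 / 4 * σ ^ 2 * log (3 * d)) + 4 * δ ^ 2 := by
        gcongr
        exact (integral_sq_pi_norm_pi_gaussianReal_le (ι := Fin d) s).trans_eq
          (by rw [Fintype.card_fin]; rfl)
    _ = 3 * σ ^ 2 * log (3 * d) + 4 * δ ^ 2 := by ring

/-- **Lemma (second moment of the `ℓ_∞`-norm of a shifted Gaussian vector).**
If `‖v‖_∞ ≤ 1`, `δ ≥ 0`, `σ ≥ 0`, and `X ~ N(δ·v, σ²·I_{d×d})` (i.e. the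
coordinates are independent with `X_j ~ N(δ·v_j, σ²)`), then
`E[‖X‖_∞²] ≤ 3σ²·log(3d) + 4δ²`. -/
theorem gaussian_sup_norm_sq_moment
    (d : ℕ) (hd : 1 ≤ d) (v : Fin d → ℝ) (hv : ∀ j, |v j| ≤ 1)
    (δ σ : ℝ) (hδ : 0 ≤ δ) (hσ : 0 ≤ σ) :
    (∫ x : Fin d → ℝ, (⨆ j, |x j|) ^ 2
        ∂(Measure.pi fun j => gaussianReal (δ * v j) ⟨σ ^ 2, sq_nonneg σ⟩)) ≤
      3 * σ ^ 2 * Real.log (3 * d) + 4 * δ ^ 2 :=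
  gaussian_sup_norm_sq_moment_general d hd v hv δ σ hδ
end
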